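/- The function γ_1(t) = -((2√3 + 9√2 + 18) t - 72(t² + 6t + 1)/(3t² + 2t + 3)^{3/2} + 72(t² - 6t + 1)/(3t² - 2t + 3)^{3/2} - 8√3/(t+1) - 8√3/(t-1) + (2√3 + 9√2 + 18)/t²) is strictly negative for all t ∈ (0,1). -/
import Mathlib
set_option maxHeartbeats 1000000


/-- Coefficient of `c` in `det(𝒞₁)` for two nested cubes. -/
noncomputable def gamma1 (t : ℝ) : ℝ :=
  -((2 * Real.sqrt 3 + 9 * Real.sqrt 2 + 18) * t
    - 72 * (t ^ 2 + 6 * t + 1) / (Real.sqrt (3 * t ^ 2 + 2 * t + 3)) ^ 3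
    + 72 * (t ^ 2 - 6 * t + 1) / (Real.sqrt (3 * t ^ 2 - 2 * t + 3)) ^ 3
    - 8 * Real.sqrt 3 / (t + 1)
    - 8 * Real.sqrt 3 / (t - 1)
    + (2 * Real.sqrt 3 + 9 * Real.sqrt 2 + 18) / t ^ 2)

/-- `γ₁(t) < 0` for all `t ∈ (0,1)`. -/
theorem stmt18 : ∀ t ∈ Set.Ioo (0 : ℝ) 1, gamma1 t < 0 := by
  rintro t ⟨ht0, ht1⟩
  unfold gamma1
  rw [neg_lt_zero]
  have h3 : (1.732 : ℝ) ≤ Real.sqrt 3 := by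
    nlinarith [Real.sq_sqrt (show (0:ℝ) ≤ 3 by norm_num), Real.sqrt_nonneg 3]
  have h2 : (1.4142 : ℝ) ≤ Real.sqrt 2 := by
    nlinarith [Real.sq_sqrt (show (0:ℝ) ≤ 2 by norm_num), Real.sqrt_nonneg 2]
  have hq1 : (0:ℝ) < 3*t^2+2*t+3 := by nlinarith
  have hq2 : (0:ℝ) < 3*t^2-2*t+3 := by nlinarith [sq_nonneg (t-1/3)]
  have hs1sq : Real.sqrt (3*t^2+2*t+3)^2 = 3*t^2+2*t+3 := Real.sq_sqrt hq1.le
  have hs2sq : Real.sqrt (3*t^2-2*t+3)^2 = 3*t^2-2*t+3 := Real.sq_sqrt hq2.le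
  have hs1pos : 0 < Real.sqrt (3*t^2+2*t+3) := Real.sqrt_pos.mpr hq1
  have hs2pos : 0 < Real.sqrt (3*t^2-2*t+3) := Real.sqrt_pos.mpr hq2
  set s1 := Real.sqrt (3*t^2+2*t+3) with hs1def
  set s2 := Real.sqrt (3*t^2-2*t+3) with hs2def
  have hs1ge : (1.732:ℝ) ≤ s1 := by nlinarith
  have hs2ge : (1.632:ℝ) ≤ s2 := by nlinarith [sq_nonneg (t-1/3)]
  have hcube1 : s1^3 = (3*t^2+2*t+3)*s1 := by
    rw [pow_succ, hs1sq]
  have hcube2 : s2^3 = (3*t^2-2*t+3)*s2 := by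
    rw [pow_succ, hs2sq]
  have hT1 : 72*(t^2+6*t+1)/s1^3 ≤ 41.6 := by
    rw [div_le_iff₀ (by positivity)]
    rw [hcube1]
    nlinarith [mul_nonneg (by linarith : (0:ℝ) ≤ s1 - 1.732) hq1.le, sq_nonneg (t-1)]
  have hT2 : (-44.2 : ℝ) ≤ 72*(t^2-6*t+1)/s2^3 := by
    rw [le_div_iff₀ (by positivity)]
    rw [hcube2]
    nlinarith [mul_nonneg (by linarith : (0:ℝ) ≤ s2 - 1.632) hq2.le, sq_nonneg (t-1)]
  have htp : t + 1 ≠ 0 := by positivity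
  have htm : t - 1 ≠ 0 := sub_ne_zero.mpr (ne_of_lt ht1)
  have h1t : (0:ℝ) < 1 - t := by linarith
  have h1t' : (0:ℝ) < 1 + t := by linarith
  have hEq : 8*Real.sqrt 3/(t+1) + 8*Real.sqrt 3/(t-1)
      = -(16*Real.sqrt 3*t/((1-t)*(1+t))) := by
    field_simp
    ring
  have hApos : (0:ℝ) < 2*Real.sqrt 3 + 9*Real.sqrt 2 + 18 := by linarith
  have hAge : (34.19:ℝ) ≤ 2*Real.sqrt 3 + 9*Real.sqrt 2 + 18 := by linarith
  rcases le_or_gt t (3/5) with hcase | hcase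
  · -- small t : A/t² is big
    have hAq : (94.8:ℝ) ≤ (2*Real.sqrt 3 + 9*Real.sqrt 2 + 18)/t^2 := by
      rw [le_div_iff₀ (by positivity)]
      nlinarith
    have hAt : (0:ℝ) ≤ (2*Real.sqrt 3 + 9*Real.sqrt 2 + 18)*t :=
      le_of_lt (mul_pos hApos ht0)
    have hC : 8*Real.sqrt 3/(t+1) + 8*Real.sqrt 3/(t-1) ≤ 0 := by
      rw [hEq, neg_nonpos]
      exact div_nonneg (mul_nonneg (mul_nonneg (by positivity) (Real.sqrt_nonneg 3)) ht0.le)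
        (mul_nonneg h1t.le h1t'.le)
    linarith
  · -- large t
    have hkey : (2*Real.sqrt 3 + 9*Real.sqrt 2 + 18)*t + (2*Real.sqrt 3 + 9*Real.sqrt 2 + 18)/t^2
        - 2*(2*Real.sqrt 3 + 9*Real.sqrt 2 + 18)
        = (2*Real.sqrt 3 + 9*Real.sqrt 2 + 18)*((1-t)*(1+t-t^2))/t^2 := by
      field_simp
      ring
    have hnn : (0:ℝ) ≤ (2*Real.sqrt 3 + 9*Real.sqrt 2 + 18)*((1-t)*(1+t-t^2))/t^2 := by
      apply div_nonneg _ (by positivity)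
      apply mul_nonneg hApos.le
      apply mul_nonneg h1t.le
      nlinarith
    have h2A : 2*(2*Real.sqrt 3 + 9*Real.sqrt 2 + 18)
        ≤ (2*Real.sqrt 3 + 9*Real.sqrt 2 + 18)*t + (2*Real.sqrt 3 + 9*Real.sqrt 2 + 18)/t^2 := by
      linarith
    have hC : 8*Real.sqrt 3/(t+1) + 8*Real.sqrt 3/(t-1) ≤ -20 := by
      rw [hEq, neg_le_neg_iff]
      rw [le_div_iff₀ (by positivity)]
      nlinarith [mul_nonneg (by linarith : (0:ℝ) ≤ Real.sqrt 3 - 1.732) ht0.le,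
        mul_nonneg (by linarith : (0:ℝ) ≤ t - 3/5) ht0.le]
    linarith
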